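/- Let 𝔤 and 𝔥 be finite-dimensional nilpotent real Lie algebras, each of dimension 5 or 7. Then the product Lie algebra 𝔤 × 𝔥 admits a symplectic structure if and only if both 𝔤 × 𝔤 and 𝔥 × 𝔥 admit symplectic structures. -/

import Mathlib

/-- The componentwise Lie ring structure on the product of two Lie rings. -/
instance prodLieRing (L M : Type*) [LieRing L] [LieRing M] : LieRing (L × M) where
  bracket x y := (⁅x.1, y.1⁆, ⁅x.2, y.2⁆)
  add_lie x y z := by
    show (⁅x.1 + y.1, z.1⁆, ⁅x.2 + y.2, z.2⁆) = _
    simp [add_lie, Prod.ext_iff]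
  lie_add x y z := by
    show (⁅x.1, y.1 + z.1⁆, ⁅x.2, y.2 + z.2⁆) = _
    simp [lie_add, Prod.ext_iff]
  lie_self x := by
    show (⁅x.1, x.1⁆, ⁅x.2, x.2⁆) = (0, 0)
    simp
  leibniz_lie x y z := by
    show (⁅x.1, ⁅y.1, z.1⁆⁆, ⁅x.2, ⁅y.2, z.2⁆⁆) = _
    simp only [Prod.ext_iff]
    constructor <;> exact leibniz_lie _ _ _

/-- The componentwise Lie algebra structure on the product of two Lie algebras. -/
instance prodLieAlgebra (R L M : Type*) [CommRing R] [LieRing L] [LieRing M]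
    [LieAlgebra R L] [LieAlgebra R M] : LieAlgebra R (L × M) :=
  { (inferInstance : Module R (L × M)) with
    lie_smul := fun t x y => by
      show (⁅x.1, (t • y).1⁆, ⁅x.2, (t • y).2⁆) = t • (⁅x.1, y.1⁆, ⁅x.2, y.2⁆)
      simp [Prod.smul_def, Prod.ext_iff] }

/-- A 2-cocycle on a real Lie algebra `L`: an alternating (hence skew-symmetric) bilinear
form `ω` such that `ω ⁅x,y⁆ z + ω ⁅y,z⁆ x + ω ⁅z,x⁆ y = 0` for all `x y z`. -/
def IsCocycle {L : Type*} [LieRing L] [LieAlgebra ℝ L]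
    (ω : L →ₗ[ℝ] L →ₗ[ℝ] ℝ) : Prop :=
  (∀ x, ω x x = 0) ∧ ∀ x y z, ω ⁅x, y⁆ z + ω ⁅y, z⁆ x + ω ⁅z, x⁆ y = 0

/-- A symplectic structure on a real Lie algebra: a nondegenerate 2-cocycle. -/
def IsSymplecticForm {L : Type*} [LieRing L] [LieAlgebra ℝ L]
    (ω : L →ₗ[ℝ] L →ₗ[ℝ] ℝ) : Prop :=
  IsCocycle ω ∧ ∀ x, (∀ y, ω x y = 0) → x = 0

/-!
An even-dimensional real Lie algebra `𝔤` is symplectic as soon as it carries a 2-cocycle `ω`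
whose radical meets `[𝔤, 𝔤]` trivially: choose a complement `S ⊇ [𝔤, 𝔤]` of `ker ω`, and add to
`ω` the pull-back, along the projection onto `ker ω` with kernel `S`, of a nondegenerate
alternating form on `ker ω` (which is even-dimensional, since the rank of an alternating form is
even). The added form kills all brackets, so it is a cocycle.

Such a cocycle exists on `𝔤 × 𝔥` when it exists on both factors, and conversely a symplectic form
`Ω` on `𝔤 × 𝔥` restricts to such a cocycle on `𝔤`: by the cocycle identity `Ω` pairs `[𝔤, 𝔤]`
trivially with `𝔥`. As `dim 𝔤 + dim 𝔥` is even when both dimensions are odd, each side of the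
equivalence amounts to both factors carrying such a cocycle.
-/

open Module LinearMap

section AlternatingForm

variable {K V : Type*} [Field K] [AddCommGroup V] [Module K V]

theorem exists_isAlt_separatingLeft_of_even_finrank [FiniteDimensional K V]
    (h : Even (finrank K V)) : ∃ Θ : V →ₗ[K] V →ₗ[K] K, Θ.IsAlt ∧ Θ.SeparatingLeft := by
  obtain ⟨m, hm⟩ := h
  let W := Fin m → K
  let e : V ≃ₗ[K] W × Dual K W := LinearEquiv.ofFinrankEq _ _ (by simp [hm, W])
  -- `P - P.flip` is the standard form `((w, f), (w', f')) ↦ f' w - f w'` on `W × W*`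
  let P : (W × Dual K W) →ₗ[K] (W × Dual K W) →ₗ[K] K :=
    applyₗ.compl₁₂ (fst K W (Dual K W)) (snd K W (Dual K W))
  refine ⟨(P - P.flip).compl₁₂ e e, fun x => sub_self _, fun x hx => ?_⟩
  have hw : (e x).1 = 0 := (forall_dual_apply_eq_zero_iff K _).mp fun g => by
    simpa [P] using hx (e.symm (0, g))
  have hf : (e x).2 = 0 := LinearMap.ext fun w => by
    simpa [P] using hx (e.symm (w, 0))
  exact e.map_eq_zero_iff.mp (Prod.ext hw hf)

namespace LinearMap.IsAlt

variable {ω : V →ₗ[K] V →ₗ[K] K}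

theorem separatingLeft_domRestrict_of_isCompl_ker (hω : ω.IsAlt) {S : Submodule K V}
    (hS : IsCompl S (ker ω)) : (ω.domRestrict₁₂ S S).SeparatingLeft := by
  rintro ⟨x, hxS⟩ hx
  suffices x ∈ S ⊓ ker ω by simpa [hS.inf_eq_bot] using this
  refine ⟨hxS, LinearMap.ext fun y => ?_⟩
  obtain ⟨s, hs, k, hk, rfl⟩ :=
    Submodule.mem_sup.mp (hS.sup_eq_top ▸ Submodule.mem_top : y ∈ S ⊔ ker ω)
  rw [mem_ker] at hk
  have hxs : ω x s = 0 := hx ⟨s, hs⟩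
  simp [hxs, hω.isRefl.eq_iff.mp (LinearMap.congr_fun hk x)]

theorem even_finrank_of_separatingLeft [CharZero K] [FiniteDimensional K V] (hω : ω.IsAlt)
    (hsep : ω.SeparatingLeft) : Even (finrank K V) := by
  by_contra hodd
  let b := Module.finBasis K V
  set A := LinearMap.toMatrix₂ b b ω
  have hskew : A.transpose = -A := by
    ext i j
    simp [A, toMatrix₂_apply, ← hω.neg (b i) (b j)]
  have hdet := A.det_transpose
  rw [hskew, Matrix.det_neg, Fintype.card_fin, (Nat.not_even_iff_odd.mp hodd).neg_one_pow,
    neg_one_mul] at hdet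
  exact (separatingLeft_iff_det_ne_zero b).mp hsep (neg_eq_self.mp hdet)

theorem even_finrank_add_finrank_ker [CharZero K] [FiniteDimensional K V] (hω : ω.IsAlt) :
    Even (finrank K V + finrank K (ker ω)) := by
  obtain ⟨S, hS⟩ := (ker ω).exists_isCompl
  have hSeven : Even (finrank K S) :=
    even_finrank_of_separatingLeft (fun x => hω x)
      (hω.separatingLeft_domRestrict_of_isCompl_ker hS.symm)
  rw [← Submodule.finrank_add_eq_of_isCompl hS, add_right_comm]
  exact (Even.add_self _).add hSeven

theorem exists_le_ker_add_separatingLeft [CharZero K] [FiniteDimensional K V] (hω : ω.IsAlt)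
    (hV : Even (finrank K V)) {S : Submodule K V} (hS : IsCompl S (ker ω)) :
    ∃ β : V →ₗ[K] V →ₗ[K] K, β.IsAlt ∧ S ≤ ker β ∧ (ω + β).SeparatingLeft := by
  obtain ⟨Θ, hΘ, hΘsep⟩ := exists_isAlt_separatingLeft_of_even_finrank
    ((Nat.even_add.mp hω.even_finrank_add_finrank_ker).mp hV)
  let π := Submodule.projectionOnto (ker ω) S hS.symm
  have hπ : ∀ {x}, π x = 0 ↔ x ∈ S := Submodule.projectionOnto_apply_eq_zero_iff hS.symm
  refine ⟨Θ.compl₁₂ π π, fun x => hΘ _, fun s hs => ?_, fun x hx => ?_⟩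
  · ext y
    simp [hπ.mpr hs]
  have hωx : ∀ k ∈ ker ω, ω x k = 0 := fun k hk =>
    hω.isRefl.eq_iff.mp (LinearMap.congr_fun (mem_ker.mp hk) x)
  have hπx : π x = 0 := hΘsep _ fun k => by
    simpa [hωx k k.2, π, Submodule.projectionOnto_apply_left] using hx k
  have hxK : x ∈ ker ω := LinearMap.ext fun y => by simpa [hπx] using hx y
  exact (Submodule.disjoint_def.mp hS.disjoint) x (hπ.mp hπx) hxK

end LinearMap.IsAlt

end AlternatingForm

namespace LieAlgebra

variable {R L : Type*} [CommRing R] [LieRing L] [LieAlgebra R L]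

theorem lie_mem_derivedSeries_one (x y : L) : ⁅x, y⁆ ∈ derivedSeries R L 1 :=
  LieSubmodule.lie_mem_lie (LieSubmodule.mem_top x) (LieSubmodule.mem_top y)

theorem derivedSeries_one_le_of_forall_lie_mem {N : Submodule R L} (h : ∀ x y : L, ⁅x, y⁆ ∈ N) :
    (derivedSeries R L 1 : Submodule R L) ≤ N := by
  rw [coe_derivedSeries_one_eq, Submodule.span_le]
  rintro _ ⟨x, y, rfl⟩
  exact h x y

end LieAlgebra

section Cocycle

variable {L L' : Type*} [LieRing L] [LieAlgebra ℝ L] [LieRing L'] [LieAlgebra ℝ L']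
  {ω ω' : L →ₗ[ℝ] L →ₗ[ℝ] ℝ}

theorem IsCocycle.isAlt (h : IsCocycle ω) : ω.IsAlt := h.1

theorem IsCocycle.add (h : IsCocycle ω) (h' : IsCocycle ω') : IsCocycle (ω + ω') :=
  ⟨fun x => by simp [h.1 x, h'.1 x], fun x y z => by
    simp only [LinearMap.add_apply]
    linear_combination h.2 x y z + h'.2 x y z⟩

theorem IsCocycle.compl₁₂ (h : IsCocycle ω) (f : L' →ₗ⁅ℝ⁆ L) :
    IsCocycle (ω.compl₁₂ (f : L' →ₗ[ℝ] L) f) :=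
  ⟨fun x => h.1 (f x), fun x y z => by simpa using h.2 (f x) (f y) (f z)⟩

theorem isCocycle_of_derivedSeries_one_le_ker (hω : ω.IsAlt)
    (hker : (LieAlgebra.derivedSeries ℝ L 1 : Submodule ℝ L) ≤ ker ω) : IsCocycle ω := by
  have hlie : ∀ x y : L, ω ⁅x, y⁆ = 0 := fun x y =>
    mem_ker.mp (hker (LieAlgebra.lie_mem_derivedSeries_one x y))
  exact ⟨hω, fun x y z => by simp [hlie]⟩

theorem IsCocycle.apply_lie_eq_zero_of_lie_eq_zero (h : IsCocycle ω) {x y z : L}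
    (hyz : ⁅y, z⁆ = 0) (hzx : ⁅z, x⁆ = 0) : ω ⁅x, y⁆ z = 0 := by
  simpa [hyz, hzx] using h.2 x y z

theorem IsSymplecticForm.compl₁₂_lieEquiv (h : IsSymplecticForm ω) (e : L' ≃ₗ⁅ℝ⁆ L) :
    IsSymplecticForm (ω.compl₁₂ (e.toLieHom : L' →ₗ[ℝ] L) e.toLieHom) := by
  refine ⟨h.1.compl₁₂ e.toLieHom, fun x hx => ?_⟩
  have hex : e x = 0 := h.2 (e x) fun y => by simpa using hx (e.symm y)
  simpa using congrArg e.symm hex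

end Cocycle

def HasCocycleKerDisjointDerived (L : Type*) [LieRing L] [LieAlgebra ℝ L] : Prop :=
  ∃ ω : L →ₗ[ℝ] L →ₗ[ℝ] ℝ, IsCocycle ω ∧
    Disjoint (ker ω) (LieAlgebra.derivedSeries ℝ L 1 : Submodule ℝ L)

namespace HasCocycleKerDisjointDerived

variable {L M : Type*} [LieRing L] [LieAlgebra ℝ L] [LieRing M] [LieAlgebra ℝ M]

theorem exists_isSymplecticForm [FiniteDimensional ℝ L] (h : HasCocycleKerDisjointDerived L)
    (heven : Even (finrank ℝ L)) : ∃ Ω : L →ₗ[ℝ] L →ₗ[ℝ] ℝ, IsSymplecticForm Ω := by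
  obtain ⟨ω, hω, hdisj⟩ := h
  obtain ⟨S, hDS, hS⟩ := hdisj.symm.exists_isCompl
  obtain ⟨β, hβ, hSβ, hsep⟩ := hω.isAlt.exists_le_ker_add_separatingLeft heven hS
  exact ⟨ω + β, hω.add (isCocycle_of_derivedSeries_one_le_ker hβ (hDS.trans hSβ)), hsep⟩

theorem prod (hL : HasCocycleKerDisjointDerived L) (hM : HasCocycleKerDisjointDerived M) :
    HasCocycleKerDisjointDerived (L × M) := by
  obtain ⟨ω₁, h₁, hdisj₁⟩ := hL
  obtain ⟨ω₂, h₂, hdisj₂⟩ := hM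
  refine ⟨ω₁.compl₁₂ (fst ℝ L M) (fst ℝ L M) + ω₂.compl₁₂ (snd ℝ L M) (snd ℝ L M),
    (h₁.compl₁₂ (LieHom.fst ℝ L M)).add (h₂.compl₁₂ (LieHom.snd ℝ L M)), ?_⟩
  have hD : (LieAlgebra.derivedSeries ℝ (L × M) 1 : Submodule ℝ (L × M)) ≤
      (LieAlgebra.derivedSeries ℝ L 1 : Submodule ℝ L).prod (LieAlgebra.derivedSeries ℝ M 1) :=
    LieAlgebra.derivedSeries_one_le_of_forall_lie_mem fun x y =>
      ⟨LieAlgebra.lie_mem_derivedSeries_one x.1 y.1, LieAlgebra.lie_mem_derivedSeries_one x.2 y.2⟩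
  refine Submodule.disjoint_def.mpr fun x hxK hxD => ?_
  have hx₁ : x.1 ∈ ker ω₁ := LinearMap.ext fun y => by
    simpa using LinearMap.congr_fun (mem_ker.mp hxK) (y, 0)
  have hx₂ : x.2 ∈ ker ω₂ := LinearMap.ext fun y => by
    simpa using LinearMap.congr_fun (mem_ker.mp hxK) (0, y)
  exact Prod.ext (Submodule.disjoint_def.mp hdisj₁ _ hx₁ (hD hxD).1)
    (Submodule.disjoint_def.mp hdisj₂ _ hx₂ (hD hxD).2)

end HasCocycleKerDisjointDerived

namespace IsSymplecticForm

variable {L M : Type*} [LieRing L] [LieAlgebra ℝ L] [LieRing M] [LieAlgebra ℝ M]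
  {Ω : (L × M) →ₗ[ℝ] (L × M) →ₗ[ℝ] ℝ}

theorem hasCocycleKerDisjointDerived_fst (hΩ : IsSymplecticForm Ω) :
    HasCocycleKerDisjointDerived L := by
  refine ⟨Ω.compl₁₂ (inl ℝ L M) (inl ℝ L M), hΩ.1.compl₁₂ (LieHom.inl ℝ L M),
    Submodule.disjoint_def.mpr fun x hxK hxD => ?_⟩
  have hcross : ∀ y : M, Ω (x, 0) (0, y) = 0 := by
    intro y
    have hlie : ∀ a b : L, ⁅a, b⁆ ∈ ker ((Ω.flip (0, y)).comp (inl ℝ L M)) := fun a b => by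
      simpa using hΩ.1.apply_lie_eq_zero_of_lie_eq_zero (x := (a, 0)) (y := (b, 0)) (z := (0, y))
        (by simp) (by simp)
    simpa using mem_ker.mp (LieAlgebra.derivedSeries_one_le_of_forall_lie_mem hlie hxD)
  have hx : ((x, 0) : L × M) = 0 := hΩ.2 _ fun y => by
    have hx₁ : Ω (x, 0) (y.1, 0) = 0 := LinearMap.congr_fun (mem_ker.mp hxK) y.1
    calc Ω (x, 0) y = Ω (x, 0) (y.1, 0) + Ω (x, 0) (0, y.2) := by rw [← map_add]; simp
      _ = 0 := by rw [hx₁, hcross, add_zero]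
  simpa using hx

theorem hasCocycleKerDisjointDerived_snd (hΩ : IsSymplecticForm Ω) :
    HasCocycleKerDisjointDerived M :=
  (hΩ.compl₁₂_lieEquiv (LieEquiv.prodComm ℝ M L)).hasCocycleKerDisjointDerived_fst

end IsSymplecticForm

theorem nilpotent_dim5or7_prod_symplectic_iff_squares_general
    {L M : Type*} [LieRing L] [LieAlgebra ℝ L] [FiniteDimensional ℝ L]
    [LieRing M] [LieAlgebra ℝ M] [FiniteDimensional ℝ M]
    (hdimL : Module.finrank ℝ L = 5 ∨ Module.finrank ℝ L = 7)
    (hdimM : Module.finrank ℝ M = 5 ∨ Module.finrank ℝ M = 7) :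
    (∃ Ω : (L × M) →ₗ[ℝ] (L × M) →ₗ[ℝ] ℝ, IsSymplecticForm Ω) ↔
      ((∃ ω : (L × L) →ₗ[ℝ] (L × L) →ₗ[ℝ] ℝ, IsSymplecticForm ω) ∧
        ∃ ω : (M × M) →ₗ[ℝ] (M × M) →ₗ[ℝ] ℝ, IsSymplecticForm ω) := by
  constructor
  · rintro ⟨Ω, hΩ⟩
    have hL := hΩ.hasCocycleKerDisjointDerived_fst
    have hM := hΩ.hasCocycleKerDisjointDerived_snd
    exact ⟨(hL.prod hL).exists_isSymplecticForm (by rw [finrank_prod]; exact Even.add_self _),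
      (hM.prod hM).exists_isSymplecticForm (by rw [finrank_prod]; exact Even.add_self _)⟩
  · rintro ⟨⟨ω₁, h₁⟩, ⟨ω₂, h₂⟩⟩
    have hoddL : Odd (finrank ℝ L) := by rcases hdimL with h | h <;> rw [h] <;> decide
    have hoddM : Odd (finrank ℝ M) := by rcases hdimM with h | h <;> rw [h] <;> decide
    exact (h₁.hasCocycleKerDisjointDerived_fst.prod h₂.hasCocycleKerDisjointDerived_fst
      ).exists_isSymplecticForm (by rw [finrank_prod]; exact hoddL.add_odd hoddM)

/-- For nilpotent real Lie algebras `L`, `M`, each of dimension 5 or 7, the product `L × M`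
admits a symplectic structure if and only if both `L × L` and `M × M` do. -/
theorem nilpotent_dim5or7_prod_symplectic_iff_squares
    {L M : Type*} [LieRing L] [LieAlgebra ℝ L] [FiniteDimensional ℝ L]
    [LieRing.IsNilpotent L]
    [LieRing M] [LieAlgebra ℝ M] [FiniteDimensional ℝ M]
    [LieRing.IsNilpotent M]
    (hdimL : Module.finrank ℝ L = 5 ∨ Module.finrank ℝ L = 7)
    (hdimM : Module.finrank ℝ M = 5 ∨ Module.finrank ℝ M = 7) :
    (∃ Ω : (L × M) →ₗ[ℝ] (L × M) →ₗ[ℝ] ℝ, IsSymplecticForm Ω) ↔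
      ((∃ ω : (L × L) →ₗ[ℝ] (L × L) →ₗ[ℝ] ℝ, IsSymplecticForm ω) ∧
        ∃ ω : (M × M) →ₗ[ℝ] (M × M) →ₗ[ℝ] ℝ, IsSymplecticForm ω) :=
  nilpotent_dim5or7_prod_symplectic_iff_squares_general hdimL hdimM
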